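/- Let x_1 < y_1 < x_2 < ... < y_{n-1} < x_n be real numbers. Then the rational function G(z) = ∏_{i=1}^{n-1}(z - y_i) / ∏_{i=1}^{n}(z - x_i) has a partial fraction decomposition G(z) = ∑_{i=1}^{n} μ_i / (z - x_i) where each μ_i > 0 and ∑_{i=1}^{n} μ_i = 1. In other words, G is the Cauchy transform of a probability measure supported on {x_1, ..., x_n}. -/

import Mathlib

/-!
`G` is `P / Q` with `P = ∏ (X - yⱼ)` monic of degree `n` and `Q = ∏ (X - xᵢ)` of degree `n + 1`.
Lagrange interpolation of `P` at the nodes `xᵢ` gives the partial fraction decomposition with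
residues `μᵢ = P(xᵢ) / Q'(xᵢ)`, and comparing the coefficients of `Xⁿ` gives `∑ μᵢ = 1`.
For positivity, pair each `yⱼ` with whichever of its neighbours `xⱼ`, `xⱼ₊₁` lies farther from
`xᵢ`, namely `x (i.succAbove j)`: it lies on the same side of `xᵢ` as `yⱼ`, so the factors
`xᵢ - yⱼ` and `xᵢ - x (i.succAbove j)` of `μᵢ` have the same sign.
-/

open Finset Polynomial

theorem Fin.prod_univ_erase_eq_prod_succAbove {M : Type*} [CommMonoid M] {n : ℕ}
    (f : Fin (n + 1) → M) (i : Fin (n + 1)) :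
    ∏ j ∈ univ.erase i, f j = ∏ j : Fin n, f (i.succAbove j) := by
  rw [← compl_singleton, ← Fin.image_succAbove_univ,
    prod_image fun _ _ _ _ h => Fin.succAbove_right_injective h]

namespace Lagrange

variable {F ι : Type*} [Field F] [DecidableEq ι] {s : Finset ι} {v : ι → F}

theorem eval_div_eval_nodal_eq_sum {P : F[X]} (hvs : Set.InjOn v s) (hP : P.degree < #s)
    {x : F} (hx : ∀ i ∈ s, x ≠ v i) :
    P.eval x / (nodal s v).eval x =
      ∑ i ∈ s, P.eval (v i) / (∏ j ∈ s.erase i, (v i - v j)) / (x - v i) := by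
  nth_rewrite 1 [eq_interpolate hvs hP]
  rw [eval_interpolate_not_at_node _ hx, mul_div_cancel_left₀ _ (eval_nodal_not_at_node hx)]
  refine sum_congr rfl fun i _ => ?_
  rw [nodalWeight, prod_inv_distrib]
  ring

end Lagrange

section Interlacing

variable {n : ℕ} {x : Fin (n + 1) → ℝ} {y : Fin n → ℝ}

theorem strictMono_of_interlace (h : ∀ i : Fin n, x i.castSucc < y i ∧ y i < x i.succ) :
    StrictMono x :=
  Fin.strictMono_iff_lt_succ.mpr fun i => (h i).1.trans (h i).2

theorem div_sub_succAbove_pos_of_interlace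
    (h : ∀ i : Fin n, x i.castSucc < y i ∧ y i < x i.succ) (i : Fin (n + 1)) (j : Fin n) :
    0 < (x i - y j) / (x i - x (i.succAbove j)) := by
  have hx := strictMono_of_interlace h
  rcases lt_or_ge j.castSucc i with hji | hij
  · rw [Fin.succAbove_of_castSucc_lt _ _ hji]
    have : x j.succ ≤ x i := hx.monotone (Fin.castSucc_lt_iff_succ_le.mp hji)
    exact div_pos (by linarith [(h j).2]) (by linarith [hx hji])
  · rw [Fin.succAbove_of_le_castSucc _ _ hij]
    have : x i ≤ x j.castSucc := hx.monotone hij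
    exact div_pos_of_neg_of_neg (by linarith [(h j).1])
      (by linarith [hx (Fin.castSucc_lt_succ (i := j))])

theorem residue_pos_of_interlace (h : ∀ i : Fin n, x i.castSucc < y i ∧ y i < x i.succ)
    (i : Fin (n + 1)) : 0 < (∏ j, (x i - y j)) / ∏ j ∈ univ.erase i, (x i - x j) := by
  rw [Fin.prod_univ_erase_eq_prod_succAbove, ← prod_div_distrib]
  exact prod_pos fun j _ => div_sub_succAbove_pos_of_interlace h i j

end Interlacing

/-- Partial fraction decomposition of `G(z) = ∏ (z - yⱼ) / ∏ (z - xᵢ)` for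
interlacing sequences `x₀ < y₀ < x₁ < ⋯ < y_{n-1} < x_n`: the residues
`μ i = ∏ⱼ (xᵢ - yⱼ) / ∏_{j ≠ i} (xᵢ - xⱼ)` are positive, sum to `1`, and
`G(z) = ∑ μᵢ / (z - xᵢ)`; i.e. `G` is the Cauchy transform of a probability
measure supported on `{x₀, …, x_n}`. -/
theorem cauchy_transform_partial_fraction (n : ℕ)
    (x : Fin (n + 1) → ℝ) (y : Fin n → ℝ)
    (hinter : ∀ i : Fin n, x i.castSucc < y i ∧ y i < x i.succ)
    (μ : Fin (n + 1) → ℝ)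
    (hμ : ∀ i, μ i = (∏ j, (x i - y j)) / ∏ j ∈ univ.erase i, (x i - x j)) :
    (∀ i, 0 < μ i) ∧ (∑ i, μ i = 1) ∧
      ∀ z : ℝ, z ∉ Set.range x →
        (∏ j, (z - y j)) / (∏ i, (z - x i)) = ∑ i, μ i / (z - x i) := by
  have hinj : Set.InjOn x (univ : Finset (Fin (n + 1))) :=
    (strictMono_of_interlace hinter).injective.injOn
  have hdeg : (Lagrange.nodal univ y).degree < #(univ : Finset (Fin (n + 1))) := by
    rw [Lagrange.degree_nodal, card_univ, card_univ, Fintype.card_fin, Fintype.card_fin]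
    exact_mod_cast n.lt_succ_self
  refine ⟨fun i => hμ i ▸ residue_pos_of_interlace hinter i, ?_, fun z hz => ?_⟩
  · have hlead : (Lagrange.nodal univ y).coeff n = 1 := by
      simpa [Lagrange.natDegree_nodal] using
        (Lagrange.nodal_monic (s := univ) (v := y)).coeff_natDegree
    have hsum := Lagrange.coeff_eq_sum hinj hdeg
    simp only [card_univ, Fintype.card_fin, add_tsub_cancel_right, hlead,
      Lagrange.eval_nodal] at hsum
    simp only [hμ, hsum]
  · have hz' : ∀ i ∈ univ, z ≠ x i := fun i _ h => hz ⟨i, h.symm⟩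
    have hpf := Lagrange.eval_div_eval_nodal_eq_sum hinj hdeg hz'
    simp only [Lagrange.eval_nodal] at hpf
    simp only [hμ, hpf]
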